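/- For n ≥ 1, W_n = (n!/n^{n-1})·Σ_{k=0}^{n-2} n^k/k! satisfies the asymptotic W_n / n^{3/2} → √(2π)/2 as n → ∞. -/

import Mathlib

/-!
With `a_k = n^k/k!` and `S_n = Σ_{k<n} a_k` one has `W_n = n S_n / a_n - n`, and Stirling's formula
gives `e^n / (a_n √n) → √(2π)`, so it suffices that `S_n / e^n → 1/2`.

The terms `a_{n-1-j}` and `a_{n+j}` mirror each other around the mode: their ratio
`a_{n+j} / a_{n-1-j} = ∏_{i ≤ j} n² / (n² - i²)` lies between `1` and `(1 - j³/n²)⁻¹`. The first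
bound gives `2 S_n ≤ e^n`. The second, summed over `j < J` for a scale `√n ≪ J ≪ n^(2/3)`, gives
`Σ_{k<n+J} a_k ≤ 2 S_n + o(e^n)`, while the tail beyond `n + J` is dominated by a geometric series
and is `O(n a_n / J) = o(e^n)`.
-/

open Filter

/-- The Riordan–Sloane quantity `W_n = (n!/n^(n-1)) Σ_{k=0}^{n-2} n^k/k!` as a real. -/
noncomputable def Wr (n : ℕ) : ℝ :=
  ((n.factorial : ℝ) / (n : ℝ) ^ (n - 1)) *
    ∑ k ∈ Finset.range (n - 1), (n : ℝ) ^ k / (k.factorial : ℝ)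

open Finset Real Topology

noncomputable def expTerm (x : ℝ) (k : ℕ) : ℝ := x ^ k / (k.factorial : ℝ)

section
variable {x : ℝ}

theorem hasSum_expTerm (x : ℝ) : HasSum (expTerm x) (exp x) := by
  rw [exp_eq_exp_ℝ]
  exact NormedSpace.expSeries_div_hasSum_exp x

theorem expTerm_nonneg (hx : 0 ≤ x) (k : ℕ) : 0 ≤ expTerm x k := by
  unfold expTerm; positivity

theorem succ_mul_expTerm_succ (x : ℝ) (k : ℕ) :
    (k + 1) * expTerm x (k + 1) = x * expTerm x k := by
  unfold expTerm
  rw [Nat.factorial_succ]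
  push_cast
  field_simp
  ring

theorem sum_range_expTerm_le_exp (hx : 0 ≤ x) (m : ℕ) : ∑ k ∈ range m, expTerm x k ≤ exp x :=
  sum_le_hasSum _ (fun k _ => expTerm_nonneg hx k) (hasSum_expTerm x)

theorem expTerm_add_le (hx : 0 ≤ x) (m k : ℕ) :
    expTerm x (m + k) ≤ expTerm x m * (x / (m + 1)) ^ k := by
  induction k with
  | zero => simp
  | succ k ih =>
    have hrec := succ_mul_expTerm_succ x (m + k)
    have hstep : expTerm x (m + k + 1) ≤ expTerm x (m + k) * (x / (m + 1)) := by
      rw [mul_div_assoc', le_div_iff₀ (by positivity)]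
      push_cast at hrec
      nlinarith [expTerm_nonneg hx (m + k), expTerm_nonneg hx (m + k + 1),
        (by positivity : (0:ℝ) ≤ k)]
    calc expTerm x (m + (k + 1)) ≤ expTerm x (m + k) * (x / (m + 1)) := hstep
      _ ≤ expTerm x m * (x / (m + 1)) ^ k * (x / (m + 1)) := by gcongr
      _ = expTerm x m * (x / (m + 1)) ^ (k + 1) := by ring

theorem exp_sub_sum_range_expTerm_le (hx : 0 ≤ x) {m : ℕ} (hxm : x < m + 1) :
    exp x - ∑ k ∈ range m, expTerm x k ≤ expTerm x m * ((m + 1) / (m + 1 - x)) := by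
  have htail : HasSum (fun k => expTerm x (k + m)) (exp x - ∑ k ∈ range m, expTerm x k) :=
    (hasSum_nat_add_iff' m).mpr (hasSum_expTerm x)
  have hgeom := (hasSum_geometric_of_lt_one (r := x / (m + 1)) (by positivity)
    ((div_lt_one (by positivity)).mpr hxm)).mul_left (expTerm x m)
  have hratio : (1 - x / (m + 1))⁻¹ = (m + 1) / (m + 1 - x) := by
    field_simp
  rw [← hratio]
  exact hasSum_le (fun k => by rw [add_comm]; exact expTerm_add_le hx m k) htail hgeom

end

theorem expTerm_pred_self {n : ℕ} (hn : n ≠ 0) : expTerm n (n - 1) = expTerm n n := by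
  obtain ⟨m, rfl⟩ := Nat.exists_eq_add_one_of_ne_zero hn
  have h := succ_mul_expTerm_succ (m + 1 : ℕ) m
  push_cast at h ⊢
  exact (mul_left_cancel₀ (by positivity) h).symm

theorem expTerm_add_le_expTerm_self (n j : ℕ) : expTerm n (n + j) ≤ expTerm n n := by
  calc expTerm n (n + j) ≤ expTerm n n * (n / (n + 1)) ^ j := expTerm_add_le (by positivity) n j
    _ ≤ expTerm n n * 1 := by
      gcongr
      · exact expTerm_nonneg (by positivity) n
      · exact pow_le_one₀ (by positivity) ((div_le_one (by positivity)).mpr (by linarith))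
    _ = expTerm n n := mul_one _

theorem expTerm_mirror_recurrences {n p j : ℕ} (h : p + j + 2 = n) :
    ((p : ℝ) + 1) * expTerm n (p + 1) = n * expTerm n p ∧
      ((n : ℝ) + j + 1) * expTerm n (n + j + 1) = n * expTerm n (n + j) ∧
      ((p : ℝ) + 1) * ((n : ℝ) + j + 1) = (n : ℝ) ^ 2 - ((j : ℝ) + 1) ^ 2 := by
  have hcast : (p : ℝ) + j + 2 = n := by exact_mod_cast h
  refine ⟨succ_mul_expTerm_succ n p, ?_, by rw [← hcast]; ring⟩
  simpa [add_assoc] using succ_mul_expTerm_succ n (n + j)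

theorem expTerm_le_expTerm_add {n p j : ℕ} (h : p + j + 1 = n) :
    expTerm n p ≤ expTerm n (n + j) := by
  induction j generalizing p with
  | zero =>
    obtain rfl : p = n - 1 := by omega
    rw [add_zero, expTerm_pred_self (by omega)]
  | succ j ih =>
    obtain ⟨hp, hq, hprod⟩ := expTerm_mirror_recurrences (n := n) (p := p) (j := j) (by omega)
    have hn : (0 : ℝ) < n := by exact_mod_cast (show 0 < n by omega)
    have key : (n : ℝ) ^ 2 * expTerm n p ≤ n ^ 2 * expTerm n (n + j + 1) :=
      calc (n : ℝ) ^ 2 * expTerm n p = n * ((p + 1) * expTerm n (p + 1)) := by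
            linear_combination (-(n : ℝ)) * hp
        _ ≤ n * ((p + 1) * expTerm n (n + j)) := by gcongr; exact ih (by omega)
        _ = ((p + 1) * (n + j + 1)) * expTerm n (n + j + 1) := by
            linear_combination (-((p : ℝ) + 1)) * hq
        _ ≤ n ^ 2 * expTerm n (n + j + 1) := by
          rw [hprod]
          exact mul_le_mul_of_nonneg_right (by nlinarith) (expTerm_nonneg hn.le _)
    exact le_of_mul_le_mul_left key (by positivity)

theorem sub_cube_mul_expTerm_add_le {n p j : ℕ} (h : p + j + 1 = n) :
    ((n : ℝ) ^ 2 - (j : ℝ) ^ 3) * expTerm n (n + j) ≤ n ^ 2 * expTerm n p := by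
  induction j generalizing p with
  | zero =>
    obtain rfl : p = n - 1 := by omega
    simp [expTerm_pred_self (by omega : n ≠ 0)]
  | succ j ih =>
    obtain ⟨hp, hq, hprod⟩ := expTerm_mirror_recurrences (n := n) (p := p) (j := j) (by omega)
    have hn : (0 : ℝ) < n := by exact_mod_cast (show 0 < n by omega)
    have hj : (0 : ℝ) ≤ j := j.cast_nonneg
    have hpoly : (n : ℝ) ^ 2 * (n ^ 2 - ((j : ℝ) + 1) ^ 3) ≤
        (n ^ 2 - ((j : ℝ) + 1) ^ 2) * (n ^ 2 - j ^ 3) := by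
      nlinarith [mul_nonneg (sq_nonneg (n : ℝ)) (by positivity : (0 : ℝ) ≤ 2 * j ^ 2 + j),
        mul_nonneg (sq_nonneg ((j : ℝ) + 1)) (pow_nonneg hj 3)]
    have key : (n : ℝ) ^ 2 * (((n : ℝ) ^ 2 - ((j : ℝ) + 1) ^ 3) * expTerm n (n + j + 1)) ≤
        n ^ 2 * (n ^ 2 * expTerm n p) :=
      calc (n : ℝ) ^ 2 * ((n ^ 2 - ((j : ℝ) + 1) ^ 3) * expTerm n (n + j + 1))
          ≤ (n ^ 2 - ((j : ℝ) + 1) ^ 2) * (n ^ 2 - j ^ 3) * expTerm n (n + j + 1) := by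
            rw [← mul_assoc]
            exact mul_le_mul_of_nonneg_right hpoly (expTerm_nonneg hn.le _)
        _ = (p + 1) * (((n : ℝ) ^ 2 - j ^ 3) * expTerm n (n + j)) * n := by
            rw [← hprod]; linear_combination ((p : ℝ) + 1) * (n ^ 2 - j ^ 3) * hq
        _ ≤ (p + 1) * (n ^ 2 * expTerm n (p + 1)) * n := by
            exact mul_le_mul_of_nonneg_right
              (mul_le_mul_of_nonneg_left (ih (by omega)) (by positivity)) hn.le
        _ = n ^ 2 * (n ^ 2 * expTerm n p) := by linear_combination (n : ℝ) ^ 3 * hp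
    push_cast
    exact le_of_mul_le_mul_left key (by positivity)

theorem two_mul_sum_range_expTerm_le_exp (n : ℕ) : 2 * ∑ k ∈ range n, expTerm n k ≤ exp n := by
  have hmirror : ∑ k ∈ range n, expTerm n k ≤ ∑ j ∈ range n, expTerm n (n + j) := by
    rw [← sum_range_reflect]
    exact sum_le_sum fun j hj => expTerm_le_expTerm_add (by rw [mem_range] at hj; omega)
  calc 2 * ∑ k ∈ range n, expTerm n k
      ≤ ∑ k ∈ range n, expTerm n k + ∑ j ∈ range n, expTerm n (n + j) := by linarith
    _ = ∑ k ∈ range (n + n), expTerm n k := (sum_range_add _ _ _).symm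
    _ ≤ exp n := sum_range_expTerm_le_exp n.cast_nonneg _

theorem sq_mul_sum_range_expTerm_add_le {n J : ℕ} (hJ : J ≤ n) :
    (n : ℝ) ^ 2 * ∑ j ∈ range J, expTerm n (n + j) ≤
      n ^ 2 * ∑ k ∈ range n, expTerm n k + J ^ 3 * ∑ j ∈ range J, expTerm n (n + j) := by
  have hterm : ∀ j ∈ range J, (n : ℝ) ^ 2 * expTerm n (n + j) ≤
      n ^ 2 * expTerm n (n - 1 - j) + J ^ 3 * expTerm n (n + j) := by
    intro j hj
    rw [mem_range] at hj
    have hcube : (j : ℝ) ^ 3 ≤ J ^ 3 := by gcongr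
    nlinarith [sub_cube_mul_expTerm_add_le (n := n) (p := n - 1 - j) (j := j) (by omega),
      expTerm_nonneg n.cast_nonneg (n + j)]
  have hmirror : ∑ j ∈ range J, expTerm n (n - 1 - j) ≤ ∑ k ∈ range n, expTerm n k := by
    rw [← sum_range_reflect _ n]
    exact sum_le_sum_of_subset_of_nonneg (range_subset_range.mpr hJ)
      fun k _ _ => expTerm_nonneg n.cast_nonneg _
  calc (n : ℝ) ^ 2 * ∑ j ∈ range J, expTerm n (n + j)
      ≤ ∑ j ∈ range J, (n ^ 2 * expTerm n (n - 1 - j) + J ^ 3 * expTerm n (n + j)) := by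
        rw [mul_sum]; exact sum_le_sum hterm
    _ = n ^ 2 * ∑ j ∈ range J, expTerm n (n - 1 - j) +
          J ^ 3 * ∑ j ∈ range J, expTerm n (n + j) := by
        rw [sum_add_distrib, mul_sum, mul_sum]
    _ ≤ _ := by gcongr

theorem sum_range_add_expTerm_le {n J : ℕ} (hJ : J ≤ n) :
    ∑ k ∈ range (n + J), expTerm n k ≤
      2 * ∑ k ∈ range n, expTerm n k + (J : ℝ) ^ 3 / n ^ 2 * exp n := by
  rcases Nat.eq_zero_or_pos n with rfl | hn
  · obtain rfl : J = 0 := by omega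
    simp
  set S := ∑ k ∈ range n, expTerm n k
  set N := ∑ j ∈ range J, expTerm n (n + j)
  have hsplit : ∑ k ∈ range (n + J), expTerm n k = S + N := sum_range_add _ _ _
  have hS : 0 ≤ S := sum_nonneg fun k _ => expTerm_nonneg n.cast_nonneg k
  have hN : N ≤ exp n := by linarith [sum_range_expTerm_le_exp n.cast_nonneg (n + J)]
  have hNS : N ≤ S + (J : ℝ) ^ 3 / n ^ 2 * exp n :=
    calc N ≤ S + (J : ℝ) ^ 3 / n ^ 2 * N := by
          rw [div_mul_eq_mul_div, ← sub_le_iff_le_add', le_div_iff₀ (by positivity)]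
          linarith [sq_mul_sum_range_expTerm_add_le hJ]
      _ ≤ S + (J : ℝ) ^ 3 / n ^ 2 * exp n := by gcongr
  linarith

theorem exp_le_two_mul_sum_range_expTerm_add {n J : ℕ} (hJ : J ≤ n) :
    exp n ≤ 2 * ∑ k ∈ range n, expTerm n k + (J : ℝ) ^ 3 / n ^ 2 * exp n +
      expTerm n n * ((n + J + 1) / (J + 1)) := by
  have htail := exp_sub_sum_range_expTerm_le (x := n) n.cast_nonneg (m := n + J)
    (by push_cast; linarith [J.cast_nonneg (α := ℝ)])
  have hratio : (((n + J : ℕ) : ℝ) + 1) / ((n + J : ℕ) + 1 - n) = (n + J + 1) / (J + 1) := by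
    push_cast; ring_nf
  rw [hratio] at htail
  have hmono : expTerm n (n + J) * ((n + J + 1) / (J + 1)) ≤
      expTerm n n * ((n + J + 1) / (J + 1)) :=
    mul_le_mul_of_nonneg_right (expTerm_add_le_expTerm_self n J) (by positivity)
  linarith [sum_range_add_expTerm_le hJ]

theorem tendsto_exp_div_expTerm_self_mul_sqrt :
    Tendsto (fun n : ℕ => exp n / (expTerm n n * √n)) atTop (𝓝 (√(2 * π))) := by
  have h := Stirling.tendsto_stirlingSeq_sqrt_pi.const_mul (√2)
  rw [← sqrt_mul zero_le_two] at h
  refine h.congr' ?_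
  filter_upwards [eventually_ne_atTop 0] with n hn
  rw [Stirling.stirlingSeq, sqrt_mul zero_le_two, div_pow, exp_one_pow, expTerm]
  field_simp

theorem exists_scale_between_sqrt_and_pow_two_thirds :
    ∃ J : ℕ → ℕ, (∀ᶠ n in atTop, J n ≤ n) ∧
      Tendsto (fun n : ℕ => (J n : ℝ) ^ 3 / n ^ 2) atTop (𝓝 0) ∧
      Tendsto (fun n : ℕ => ((n : ℝ) + J n + 1) / ((J n + 1) * √n)) atTop (𝓝 0) := by
  -- `J n = ⌈n^(3/5)⌉₊`; in terms of `t = n^(1/10)` every estimate is polynomial.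
  set t : ℕ → ℝ := fun n => (n : ℝ) ^ ((10 : ℕ) : ℝ)⁻¹
  have ht : Tendsto t atTop atTop :=
    (tendsto_rpow_atTop (by norm_num)).comp tendsto_natCast_atTop_atTop
  have hpow (n : ℕ) : t n ^ 10 = n := rpow_inv_natCast_pow n.cast_nonneg (by norm_num)
  have hone (n : ℕ) (hn : n ≠ 0) : 1 ≤ t n :=
    one_le_rpow (by exact_mod_cast Nat.one_le_iff_ne_zero.mpr hn) (by positivity)
  have hle (n : ℕ) (hn : n ≠ 0) : ⌈t n ^ 6⌉₊ ≤ n := by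
    rw [Nat.ceil_le, ← hpow n]
    exact pow_le_pow_right₀ (hone n hn) (by norm_num)
  refine ⟨fun n => ⌈t n ^ 6⌉₊, eventually_ne_atTop 0 |>.mono hle, ?_, ?_⟩
  · refine squeeze_zero' (Eventually.of_forall fun n => by positivity) ?_
      (tendsto_const_nhds (x := (8 : ℝ)).div_atTop ((tendsto_pow_atTop two_ne_zero).comp ht))
    filter_upwards [eventually_ne_atTop 0] with n hn
    have h1 := hone n hn
    have hJ : (⌈t n ^ 6⌉₊ : ℝ) ≤ 2 * t n ^ 6 := by
      linarith [Nat.ceil_lt_add_one (by positivity : 0 ≤ t n ^ 6), one_le_pow₀ (n := 6) h1]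
    rw [Function.comp_apply, ← hpow n, div_le_div_iff₀ (by positivity) (by positivity)]
    calc (⌈t n ^ 6⌉₊ : ℝ) ^ 3 * t n ^ 2 ≤ (2 * t n ^ 6) ^ 3 * t n ^ 2 := by gcongr
      _ = 8 * (t n ^ 10) ^ 2 := by ring
  · refine squeeze_zero' (Eventually.of_forall fun n => by positivity) ?_
      (tendsto_const_nhds (x := (3 : ℝ)).div_atTop ht)
    filter_upwards [eventually_ne_atTop 0] with n hn
    have h1 := hone n hn
    have hsqrt : √(n : ℝ) = t n ^ 5 := by
      rw [← hpow n, show t n ^ 10 = (t n ^ 5) ^ 2 by ring, sqrt_sq (by positivity)]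
    have hJ : t n ^ 6 ≤ (⌈t n ^ 6⌉₊ : ℝ) := Nat.le_ceil _
    have hJn : (⌈t n ^ 6⌉₊ : ℝ) ≤ t n ^ 10 := by
      rw [hpow n]; exact_mod_cast hle n hn
    rw [hsqrt, ← hpow n, div_le_div_iff₀ (by positivity) (by positivity)]
    nlinarith [one_le_pow₀ (n := 10) h1, pow_pos (by linarith : 0 < t n) 5]

theorem tendsto_sum_range_expTerm_div_exp :
    Tendsto (fun n : ℕ => (∑ k ∈ range n, expTerm n k) / exp n) atTop (𝓝 (1 / 2)) := by
  obtain ⟨J, hJn, hcube, hratio⟩ := exists_scale_between_sqrt_and_pow_two_thirds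
  set err : ℕ → ℝ := fun n => (J n : ℝ) ^ 3 / n ^ 2 +
    expTerm n n * √n / exp n * (((n : ℝ) + J n + 1) / ((J n + 1) * √n)) with herr_def
  have herr : Tendsto err atTop (𝓝 0) := by
    rw [herr_def]
    simpa using hcube.add ((tendsto_exp_div_expTerm_self_mul_sqrt.inv₀ (by positivity)).mul hratio)
  have hlower : Tendsto (fun n => (1 - err n) / 2) atTop (𝓝 (1 / 2)) := by
    simpa using (herr.const_sub 1).div_const 2
  refine tendsto_of_tendsto_of_tendsto_of_le_of_le' hlower tendsto_const_nhds ?_ ?_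
  · filter_upwards [hJn, eventually_ne_atTop 0] with n hJ hn
    have herr_mul : err n * exp n =
        (J n : ℝ) ^ 3 / n ^ 2 * exp n + expTerm n n * ((n + J n + 1) / (J n + 1)) := by
      simp only [err]
      field_simp
    rw [div_le_div_iff₀ two_pos (exp_pos _)]
    linarith [exp_le_two_mul_sum_range_expTerm_add hJ]
  · refine Eventually.of_forall fun n => ?_
    rw [div_le_div_iff₀ (exp_pos _) two_pos]
    linarith [two_mul_sum_range_expTerm_le_exp n]

theorem Wr_eq {n : ℕ} (hn : n ≠ 0) :
    Wr n = n * (∑ k ∈ range n, expTerm n k) / expTerm n n - n := by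
  have hn1 : n - 1 + 1 = n := Nat.sub_add_cancel (Nat.one_le_iff_ne_zero.mpr hn)
  have hsplit : ∑ k ∈ range n, expTerm n k = ∑ k ∈ range (n - 1), expTerm n k + expTerm n n := by
    rw [← expTerm_pred_self hn, ← sum_range_succ, hn1]
  have hcoef : (n.factorial : ℝ) / n ^ (n - 1) = n / expTerm n n := by
    have hpow : (n : ℝ) ^ n = n ^ (n - 1) * n := by rw [← pow_succ, hn1]
    rw [expTerm, hpow]
    field_simp
  rw [Wr, hcoef, hsplit]
  simp only [expTerm]
  field_simp
  ring

theorem Wr_asymptotic :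
    Tendsto (fun n : ℕ => Wr n / (n : ℝ) ^ ((3 : ℝ) / 2)) atTop
      (nhds (Real.sqrt (2 * Real.pi) / 2)) := by
  have hinv : Tendsto (fun n : ℕ => (√(n : ℝ))⁻¹) atTop (𝓝 0) :=
    tendsto_inv_atTop_zero.comp (tendsto_sqrt_atTop.comp tendsto_natCast_atTop_atTop)
  have hlim :=
    (tendsto_sum_range_expTerm_div_exp.mul tendsto_exp_div_expTerm_self_mul_sqrt).sub hinv
  rw [show √(2 * π) / 2 = 1 / 2 * √(2 * π) - 0 by ring]
  refine hlim.congr' ?_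
  filter_upwards [eventually_ne_atTop 0] with n hn
  have hpos : (0 : ℝ) < n := by positivity
  have hrpow : (n : ℝ) ^ ((3 : ℝ) / 2) = n * √n := by
    rw [show (3 : ℝ) / 2 = 1 + 1 / 2 by norm_num, rpow_add hpos, rpow_one, sqrt_eq_rpow]
  have : 0 < expTerm n n := by unfold expTerm; positivity
  rw [Wr_eq hn, hrpow]
  field_simp
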